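/- Every GMSC program can be transformed into an equivalent normal-form GMSC program in which every terminal clause has modal depth 0 and every iteration clause has modal depth at most 1; equivalence means that the two programs accept exactly the same finite pointed Π-labeled graphs. -/
import Mathlib


/-- A finite directed node-labeled graph: finite node set `V`, out-neighbour
finsets `adj v`, and a labeling of nodes by sets of node label symbols from `α`. -/
structure LGraph (α : Type) : Type 1 where
  V : Type
  fintypeV : Fintype V
  adj : V → Finset V
  label : V → Set α

attribute [instance] LGraph.fintypeV

/-- Formulas of graded modal logic GML over node label symbols `α`:
`⊤`, labels, negation, conjunction, and graded diamonds `◇_{≥k}`. -/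
inductive GML (α : Type) : Type where
  | top : GML α
  | lab : α → GML α
  | neg : GML α → GML α
  | and : GML α → GML α → GML α
  | dia : ℕ → GML α → GML α

/-- Truth of a GML formula at a node of a labeled graph; `dia k φ` (`◇_{≥k}φ`)
holds iff at least `k` out-neighbours satisfy `φ`. -/
def GML.sat {α : Type} (G : LGraph α) : GML α → G.V → Prop
  | .top, _ => True
  | .lab p, v => p ∈ G.label v
  | .neg φ, v => ¬ GML.sat G φ v
  | .and φ ψ, v => GML.sat G φ v ∧ GML.sat G ψ v
  | .dia k φ, v => ∃ s : Finset G.V, s ⊆ G.adj v ∧ k ≤ s.card ∧ ∀ u ∈ s, GML.sat G φ u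

/-- `⊥` as a GML formula. -/
def GML.bot {α : Type} : GML α := .neg .top

/-- `□φ := ¬◇_{≥1}¬φ`. -/
def GML.box {α : Type} (φ : GML α) : GML α := .neg (.dia 1 (.neg φ))

/-- `◇_{=n}φ := ◇_{≥n}φ ∧ ¬◇_{≥n+1}φ`. -/
def GML.diaEq {α : Type} (n : ℕ) (φ : GML α) : GML α := .and (.dia n φ) (.neg (.dia (n + 1) φ))

/-- Schemata of GMSC over node label symbols `α` and head predicates (schema variables) `ν`. -/
inductive Schema (α ν : Type) : Type where
  | top : Schema α ν
  | lab : α → Schema α ν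
  | var : ν → Schema α ν
  | neg : Schema α ν → Schema α ν
  | and : Schema α ν → Schema α ν → Schema α ν
  | dia : ℕ → Schema α ν → Schema α ν

/-- Substituting a GML formula for each head predicate of a schema. -/
def Schema.subst {α ν : Type} (σ : ν → GML α) : Schema α ν → GML α
  | .top => .top
  | .lab p => .lab p
  | .var X => σ X
  | .neg φ => .neg (φ.subst σ)
  | .and φ ψ => .and (φ.subst σ) (ψ.subst σ)
  | .dia k φ => .dia k (φ.subst σ)

/-- A GMSC program over node label symbols `α` with head predicates `ν`:
terminal clauses `X(0) :− term X`, iteration clauses `X :− iter X`, and a set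
`app` of appointed predicates. -/
structure Program (α ν : Type) where
  term : ν → GML α
  iter : ν → Schema α ν
  app : Set ν

/-- The `n`-th iteration formula `Xⁿ` of a head predicate `X`: `X⁰` is the terminal body,
and `X^{n+1}` is the iteration body with each head predicate `Y` replaced by `Yⁿ`. -/
def Program.iterFormula {α ν : Type} (P : Program α ν) : ℕ → ν → GML α
  | 0 => P.term
  | n + 1 => fun X => (P.iter X).subst (P.iterFormula n)

/-- The program accepts `(G, w)` iff some appointed predicate's iteration formula is
true at `w` in some round. -/
def Program.accepts {α ν : Type} (P : Program α ν) (G : LGraph α) (w : G.V) : Prop :=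
  ∃ X ∈ P.app, ∃ n : ℕ, GML.sat G (P.iterFormula n X) w

/-- The modal depth of a GML formula: maximal nesting of graded diamonds. -/
def GML.mdepth {α : Type} : GML α → ℕ
  | .top => 0
  | .lab _ => 0
  | .neg φ => φ.mdepth
  | .and φ ψ => max φ.mdepth ψ.mdepth
  | .dia _ φ => φ.mdepth + 1

/-- The modal depth of a GMSC schema: maximal nesting of graded diamonds. -/
def Schema.mdepth {α ν : Type} : Schema α ν → ℕ
  | .top => 0
  | .lab _ => 0
  | .var _ => 0
  | .neg φ => φ.mdepth
  | .and φ ψ => max φ.mdepth ψ.mdepth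
  | .dia _ φ => φ.mdepth + 1

namespace GMSCNF

variable {α ν : Type}

/-- Height of a GML formula's syntax tree. -/
def gheight : GML α → ℕ
  | .top => 0
  | .lab _ => 0
  | .neg φ => gheight φ + 1
  | .and φ ψ => max (gheight φ) (gheight ψ) + 1
  | .dia _ φ => gheight φ + 1

/-- Height of a schema's syntax tree. -/
def sheight : Schema α ν → ℕ
  | .top => 0
  | .lab _ => 0
  | .var _ => 0
  | .neg φ => sheight φ + 1
  | .and φ ψ => max (sheight φ) (sheight ψ) + 1
  | .dia _ φ => sheight φ + 1

/-- The list of subformulas of a GML formula. -/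
def gsubs : GML α → List (GML α)
  | .top => [.top]
  | .lab p => [.lab p]
  | .neg φ => .neg φ :: gsubs φ
  | .and φ ψ => .and φ ψ :: (gsubs φ ++ gsubs ψ)
  | .dia k φ => .dia k φ :: gsubs φ

/-- The list of subschemata of a schema. -/
def ssubs : Schema α ν → List (Schema α ν)
  | .top => [.top]
  | .lab p => [.lab p]
  | .var X => [.var X]
  | .neg φ => .neg φ :: ssubs φ
  | .and φ ψ => .and φ ψ :: (ssubs φ ++ ssubs ψ)
  | .dia k φ => .dia k φ :: ssubs φ

lemma self_mem_gsubs (φ : GML α) : φ ∈ gsubs φ := by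
  cases φ <;> simp [gsubs]

lemma self_mem_ssubs (θ : Schema α ν) : θ ∈ ssubs θ := by
  cases θ <;> simp [ssubs]

lemma gsubs_trans : ∀ χ : GML α, ∀ φ ∈ gsubs χ, gsubs φ ⊆ gsubs χ := by
  intro χ
  induction χ with
  | top => intro φ h; simp [gsubs] at h; subst h; exact fun _ h => h
  | lab p => intro φ h; simp [gsubs] at h; subst h; exact fun _ h => h
  | neg ψ ih =>
      intro φ h
      rcases List.mem_cons.1 h with h | h
      · subst h; exact fun _ h => h
      · exact fun x hx => List.mem_cons_of_mem _ (ih φ h hx)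
  | and ψ χ ih1 ih2 =>
      intro φ h
      rcases List.mem_cons.1 h with h | h
      · subst h; exact fun _ h => h
      · rcases List.mem_append.1 h with h | h
        · exact fun x hx => List.mem_cons_of_mem _ (List.mem_append.2 (Or.inl (ih1 φ h hx)))
        · exact fun x hx => List.mem_cons_of_mem _ (List.mem_append.2 (Or.inr (ih2 φ h hx)))
  | dia k ψ ih =>
      intro φ h
      rcases List.mem_cons.1 h with h | h
      · subst h; exact fun _ h => h
      · exact fun x hx => List.mem_cons_of_mem _ (ih φ h hx)

lemma ssubs_trans : ∀ χ : Schema α ν, ∀ φ ∈ ssubs χ, ssubs φ ⊆ ssubs χ := by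
  intro χ
  induction χ with
  | top => intro φ h; simp [ssubs] at h; subst h; exact fun _ h => h
  | lab p => intro φ h; simp [ssubs] at h; subst h; exact fun _ h => h
  | var X => intro φ h; simp [ssubs] at h; subst h; exact fun _ h => h
  | neg ψ ih =>
      intro φ h
      rcases List.mem_cons.1 h with h | h
      · subst h; exact fun _ h => h
      · exact fun x hx => List.mem_cons_of_mem _ (ih φ h hx)
  | and ψ χ ih1 ih2 =>
      intro φ h
      rcases List.mem_cons.1 h with h | h
      · subst h; exact fun _ h => h
      · rcases List.mem_append.1 h with h | h
        · exact fun x hx => List.mem_cons_of_mem _ (List.mem_append.2 (Or.inl (ih1 φ h hx)))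
        · exact fun x hx => List.mem_cons_of_mem _ (List.mem_append.2 (Or.inr (ih2 φ h hx)))
  | dia k ψ ih =>
      intro φ h
      rcases List.mem_cons.1 h with h | h
      · subst h; exact fun _ h => h
      · exact fun x hx => List.mem_cons_of_mem _ (ih φ h hx)

/-- Keep atomic formulas, replace anything else by `⊥`. -/
def atomize : GML α → GML α
  | .top => .top
  | .lab p => .lab p
  | _ => .bot

lemma atomize_mdepth (φ : GML α) : (atomize φ).mdepth = 0 := by
  cases φ <;> simp [atomize, GML.mdepth, GML.bot]

variable [Fintype ν] (P : Program α ν)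

/-- Bound on the heights of the bodies of `P`. -/
def DD : ℕ := Finset.univ.sup fun X : ν => max (gheight (P.term X)) (sheight (P.iter X))

/-- The cycle length of the simulating program. -/
def mm : ℕ := DD P + 2

lemma two_le_mm : 2 ≤ mm P := by simp [mm]

lemma gheight_term_le (X : ν) : gheight (P.term X) ≤ DD P :=
  le_trans (le_max_left _ _)
    (Finset.le_sup (f := fun X : ν => max (gheight (P.term X)) (sheight (P.iter X)))
      (Finset.mem_univ X))

lemma sheight_iter_le (X : ν) : sheight (P.iter X) ≤ DD P :=
  le_trans (le_max_right _ _)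
    (Finset.le_sup (f := fun X : ν => max (gheight (P.term X)) (sheight (P.iter X)))
      (Finset.mem_univ X))

/-- Head predicates of the normal-form program. -/
def Idx : Type :=
  Fin (mm P) ⊕ Fin (mm P) ⊕ ν ⊕
    (Σ X : ν, {φ : GML α // φ ∈ gsubs (P.term X)}) ⊕
    (Σ X : ν, {θ : Schema α ν // θ ∈ ssubs (P.iter X)})

noncomputable instance : Fintype (Idx P) := by
  classical
  unfold Idx
  infer_instance

def clk (j : Fin (mm P)) : Idx P := Sum.inl j
def osh (j : Fin (mm P)) : Idx P := Sum.inr (Sum.inl j)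
def hd (X : ν) : Idx P := Sum.inr (Sum.inr (Sum.inl X))
def tP (X : ν) (φ : GML α) (h : φ ∈ gsubs (P.term X)) : Idx P :=
  Sum.inr (Sum.inr (Sum.inr (Sum.inl ⟨X, φ, h⟩)))
def aP (X : ν) (θ : Schema α ν) (h : θ ∈ ssubs (P.iter X)) : Idx P :=
  Sum.inr (Sum.inr (Sum.inr (Sum.inr ⟨X, θ, h⟩)))

def lastF : Fin (mm P) := ⟨mm P - 1, by have := two_le_mm P; omega⟩
def predF (j : Fin (mm P)) : Fin (mm P) :=
  if j.val = 0 then lastF P else ⟨j.val - 1, lt_of_le_of_lt (Nat.sub_le _ _) j.isLt⟩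

/-- Disjunction of schemata. -/
def sOr {ν' : Type} (a b : Schema α ν') : Schema α ν' := .neg (.and (.neg a) (.neg b))

/-- Iteration clauses computing subformulas of terminal bodies. -/
def tIter (X : ν) : (φ : GML α) → φ ∈ gsubs (P.term X) → Schema α (Idx P)
  | .top, _ => .top
  | .lab p, _ => .lab p
  | .neg ψ, h => .neg (.var (tP P X ψ
      (gsubs_trans _ _ h (List.mem_cons_of_mem _ (self_mem_gsubs ψ)))))
  | .and ψ χ, h =>
      .and (.var (tP P X ψ (gsubs_trans _ _ h
              (List.mem_cons_of_mem _ (List.mem_append.2 (Or.inl (self_mem_gsubs ψ)))))))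
           (.var (tP P X χ (gsubs_trans _ _ h
              (List.mem_cons_of_mem _ (List.mem_append.2 (Or.inr (self_mem_gsubs χ)))))))
  | .dia k ψ, h => .dia k (.var (tP P X ψ
      (gsubs_trans _ _ h (List.mem_cons_of_mem _ (self_mem_gsubs ψ)))))

/-- Iteration clauses computing subschemata of iteration bodies. -/
def aIter (X : ν) : (θ : Schema α ν) → θ ∈ ssubs (P.iter X) → Schema α (Idx P)
  | .top, _ => .top
  | .lab p, _ => .lab p
  | .var Y, _ => .var (hd P Y)
  | .neg ψ, h => .neg (.var (aP P X ψ
      (ssubs_trans _ _ h (List.mem_cons_of_mem _ (self_mem_ssubs ψ)))))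
  | .and ψ χ, h =>
      .and (.var (aP P X ψ (ssubs_trans _ _ h
              (List.mem_cons_of_mem _ (List.mem_append.2 (Or.inl (self_mem_ssubs ψ)))))))
           (.var (aP P X χ (ssubs_trans _ _ h
              (List.mem_cons_of_mem _ (List.mem_append.2 (Or.inr (self_mem_ssubs χ)))))))
  | .dia k ψ, h => .dia k (.var (aP P X ψ
      (ssubs_trans _ _ h (List.mem_cons_of_mem _ (self_mem_ssubs ψ)))))

/-- Terminal clauses of the normal-form program. -/
def NFterm : Idx P → GML α
  | Sum.inl j => if j.val = 0 then .top else .bot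
  | Sum.inr (Sum.inl j) => if j.val = 0 then .top else .bot
  | Sum.inr (Sum.inr (Sum.inl _)) => .bot
  | Sum.inr (Sum.inr (Sum.inr (Sum.inl ⟨_, φ, _⟩))) => atomize φ
  | Sum.inr (Sum.inr (Sum.inr (Sum.inr _))) => .bot

/-- Iteration clauses of the normal-form program. -/
def NFiter : Idx P → Schema α (Idx P)
  | Sum.inl j => .var (clk P (predF P j))
  | Sum.inr (Sum.inl j) => if j.val = 0 then .neg .top else .var (osh P (predF P j))
  | Sum.inr (Sum.inr (Sum.inl X)) =>
      sOr (.and (.var (osh P (lastF P))) (.var (tP P X (P.term X) (self_mem_gsubs _))))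
        (sOr (.and (.var (clk P (lastF P)))
               (.and (.neg (.var (osh P (lastF P)))) (.var (aP P X (P.iter X) (self_mem_ssubs _)))))
             (.and (.neg (.var (clk P (lastF P)))) (.var (hd P X))))
  | Sum.inr (Sum.inr (Sum.inr (Sum.inl ⟨X, φ, h⟩))) => tIter P X φ h
  | Sum.inr (Sum.inr (Sum.inr (Sum.inr ⟨X, θ, h⟩))) => aIter P X θ h

/-- The normal-form program. -/
def NFP : Program α (Idx P) :=
  ⟨NFterm P, NFiter P, {i | ∃ X ∈ P.app, i = hd P X}⟩

lemma NFP_term : (NFP P).term = NFterm P := rfl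
lemma NFP_iter : (NFP P).iter = NFiter P := rfl

lemma term_mdepth : ∀ i : Idx P, ((NFP P).term i).mdepth = 0 := by
  rintro (j | j | X | ⟨X, φ, h⟩ | ⟨X, θ, h⟩) <;>
    simp [NFP, NFterm, GML.mdepth, GML.bot, atomize_mdepth, apply_ite GML.mdepth]

lemma iter_mdepth : ∀ i : Idx P, ((NFP P).iter i).mdepth ≤ 1 := by
  rintro (j | j | X | ⟨X, φ, h⟩ | ⟨X, θ, h⟩)
  · simp [NFP, NFiter, Schema.mdepth]
  · simp [NFP, NFiter, Schema.mdepth, apply_ite Schema.mdepth]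
  · simp [NFP, NFiter, Schema.mdepth, sOr]
  · cases φ <;> simp [NFP, NFiter, tIter, Schema.mdepth]
  · cases θ <;> simp [NFP, NFiter, aIter, Schema.mdepth]

end GMSCNF

namespace GMSCNF

variable {α ν : Type} [Fintype ν] (P : Program α ν) (G : LGraph α)

lemma mod_step {m : ℕ} (hm : 2 ≤ m) (r j : ℕ) (hj : j < m) :
    (r % m = (if j = 0 then m - 1 else j - 1)) ↔ (r + 1) % m = j := by
  have h2 : r % m < m := Nat.mod_lt _ (by omega)
  have h1 : (r + 1) % m = (r % m + 1) % m := by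
    conv_lhs => rw [← Nat.mod_add_mod]
  by_cases hs : r % m = m - 1
  · have h3 : (r + 1) % m = 0 := by
      rw [h1, hs]
      have h4 : m - 1 + 1 = m := by omega
      rw [h4, Nat.mod_self]
    split_ifs with hj0 <;> omega
  · have h3 : (r + 1) % m = r % m + 1 := by
      rw [h1]; exact Nat.mod_eq_of_lt (by omega)
    split_ifs with hj0 <;> omega

lemma clk_sat (r : ℕ) (j : Fin (mm P)) (v : G.V) :
    GML.sat G ((NFP P).iterFormula r (clk P j)) v ↔ r % mm P = j.val := by
  induction r generalizing j with
  | zero =>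
      show GML.sat G (NFterm P (clk P j)) v ↔ _
      simp only [NFterm, clk]
      split_ifs with h0
      · simp only [GML.sat, Nat.zero_mod, true_iff]; omega
      · simp only [GML.sat, GML.bot, not_true, false_iff, Nat.zero_mod]; omega
  | succ r ih =>
      show GML.sat G ((NFiter P (clk P j)).subst ((NFP P).iterFormula r)) v ↔ _
      simp only [NFiter, clk, Schema.subst]
      have hval : (predF P j).val = if j.val = 0 then mm P - 1 else j.val - 1 := by
        simp [predF, lastF, apply_ite Fin.val]
      refine (ih (predF P j)).trans ?_
      rw [hval]
      exact mod_step (two_le_mm P) r j.val j.isLt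

lemma osh_sat (r : ℕ) (j : Fin (mm P)) (v : G.V) :
    GML.sat G ((NFP P).iterFormula r (osh P j)) v ↔ r = j.val := by
  induction r generalizing j with
  | zero =>
      show GML.sat G (NFterm P (osh P j)) v ↔ _
      simp only [NFterm, osh]
      split_ifs with h0
      · simp only [GML.sat, true_iff]; omega
      · simp only [GML.sat, GML.bot, not_true, false_iff]; omega
  | succ r ih =>
      show GML.sat G ((NFiter P (osh P j)).subst ((NFP P).iterFormula r)) v ↔ _
      simp only [NFiter, osh]
      by_cases h0 : j.val = 0
      · rw [if_pos h0]
        simp only [Schema.subst, GML.sat, not_true, false_iff]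
        omega
      · rw [if_neg h0]
        simp only [Schema.subst]
        have hval : (predF P j).val = j.val - 1 := by simp [predF, h0]
        refine (ih (predF P j)).trans ?_
        rw [hval]
        have := j.isLt
        omega

lemma hd_zero (X : ν) (v : G.V) :
    ¬ GML.sat G ((NFP P).iterFormula 0 (hd P X)) v := by
  show ¬ GML.sat G (NFterm P (hd P X)) v
  simp [NFterm, hd, GML.bot, GML.sat]

lemma hd_succ (r : ℕ) (X : ν) (v : G.V) :
    GML.sat G ((NFP P).iterFormula (r+1) (hd P X)) v ↔
      ((r = mm P - 1 ∧
          GML.sat G ((NFP P).iterFormula r (tP P X (P.term X) (self_mem_gsubs _))) v) ∨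
       (r % mm P = mm P - 1 ∧ ¬ r = mm P - 1 ∧
          GML.sat G ((NFP P).iterFormula r (aP P X (P.iter X) (self_mem_ssubs _))) v) ∨
       (¬ r % mm P = mm P - 1 ∧
          GML.sat G ((NFP P).iterFormula r (hd P X)) v)) := by
  show GML.sat G ((NFiter P (hd P X)).subst ((NFP P).iterFormula r)) v ↔ _
  simp only [NFiter, hd, sOr, Schema.subst, GML.sat]
  rw [clk_sat, osh_sat]
  have hlast : (lastF P).val = mm P - 1 := rfl
  rw [hlast]
  tauto

lemma t_sat (X : ν) :
    ∀ (φ : GML α) (h : φ ∈ gsubs (P.term X)) (r : ℕ), gheight φ ≤ r → ∀ v : G.V,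
      (GML.sat G ((NFP P).iterFormula r (tP P X φ h)) v ↔ GML.sat G φ v) := by
  intro φ
  induction φ with
  | top =>
      intro h r _ v
      cases r with
      | zero =>
          show GML.sat G (NFterm P (tP P X .top h)) v ↔ _
          simp [NFterm, tP, atomize]
      | succ r =>
          show GML.sat G ((NFiter P (tP P X .top h)).subst ((NFP P).iterFormula r)) v ↔ _
          simp [NFiter, tP, tIter, Schema.subst]
  | lab p =>
      intro h r _ v
      cases r with
      | zero =>
          show GML.sat G (NFterm P (tP P X (.lab p) h)) v ↔ _
          simp [NFterm, tP, atomize]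
      | succ r =>
          show GML.sat G ((NFiter P (tP P X (.lab p) h)).subst ((NFP P).iterFormula r)) v ↔ _
          simp [NFiter, tP, tIter, Schema.subst]
  | neg ψ ih =>
      intro h r hr v
      obtain ⟨r, rfl⟩ : ∃ r', r = r' + 1 := by
        cases r
        · exact absurd hr (by simp [gheight])
        · exact ⟨_, rfl⟩
      have hr' : gheight ψ ≤ r := by simp only [gheight] at hr; omega
      show GML.sat G ((NFiter P (tP P X (.neg ψ) h)).subst ((NFP P).iterFormula r)) v ↔ _
      simp only [NFiter, tP, tIter, Schema.subst, GML.sat]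
      exact not_congr (ih _ r hr' v)
  | and ψ χ ih1 ih2 =>
      intro h r hr v
      obtain ⟨r, rfl⟩ : ∃ r', r = r' + 1 := by
        cases r
        · exact absurd hr (by simp [gheight])
        · exact ⟨_, rfl⟩
      have hr1 : gheight ψ ≤ r := by simp only [gheight] at hr; omega
      have hr2 : gheight χ ≤ r := by simp only [gheight] at hr; omega
      show GML.sat G ((NFiter P (tP P X (.and ψ χ) h)).subst ((NFP P).iterFormula r)) v ↔ _
      simp only [NFiter, tP, tIter, Schema.subst, GML.sat]
      exact and_congr (ih1 _ r hr1 v) (ih2 _ r hr2 v)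
  | dia k ψ ih =>
      intro h r hr v
      obtain ⟨r, rfl⟩ : ∃ r', r = r' + 1 := by
        cases r
        · exact absurd hr (by simp [gheight])
        · exact ⟨_, rfl⟩
      have hr' : gheight ψ ≤ r := by simp only [gheight] at hr; omega
      show GML.sat G ((NFiter P (tP P X (.dia k ψ) h)).subst ((NFP P).iterFormula r)) v ↔ _
      simp only [NFiter, tP, tIter, Schema.subst, GML.sat]
      constructor
      · rintro ⟨s, hs, hc, hall⟩
        exact ⟨s, hs, hc, fun u hu => (ih _ r hr' u).1 (hall u hu)⟩
      · rintro ⟨s, hs, hc, hall⟩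
        exact ⟨s, hs, hc, fun u hu => (ih _ r hr' u).2 (hall u hu)⟩

lemma a_sat (X : ν) (n : ℕ)
    (hH : ∀ (Y : ν) (r' : ℕ) (v : G.V), mm P * n ≤ r' → r' < mm P * n + mm P →
      (GML.sat G ((NFP P).iterFormula r' (hd P Y)) v ↔
        GML.sat G (P.iterFormula (n-1) Y) v)) :
    ∀ (θ : Schema α ν) (h : θ ∈ ssubs (P.iter X)) (r : ℕ),
      mm P * n + sheight θ + 1 ≤ r → r ≤ mm P * n + mm P → ∀ v : G.V,
      (GML.sat G ((NFP P).iterFormula r (aP P X θ h)) v ↔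
        GML.sat G (θ.subst (P.iterFormula (n-1))) v) := by
  have hm := two_le_mm P
  intro θ
  induction θ with
  | top =>
      intro h r hr1 hr2 v
      obtain ⟨r, rfl⟩ : ∃ r', r = r' + 1 := by
        cases r
        · exact absurd hr1 (by omega)
        · exact ⟨_, rfl⟩
      show GML.sat G ((NFiter P (aP P X .top h)).subst ((NFP P).iterFormula r)) v ↔ _
      simp [NFiter, aP, aIter, Schema.subst, GML.sat]
  | lab p =>
      intro h r hr1 hr2 v
      obtain ⟨r, rfl⟩ : ∃ r', r = r' + 1 := by
        cases r
        · exact absurd hr1 (by omega)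
        · exact ⟨_, rfl⟩
      show GML.sat G ((NFiter P (aP P X (.lab p) h)).subst ((NFP P).iterFormula r)) v ↔ _
      simp [NFiter, aP, aIter, Schema.subst, GML.sat]
  | var Y =>
      intro h r hr1 hr2 v
      obtain ⟨r, rfl⟩ : ∃ r', r = r' + 1 := by
        cases r
        · exact absurd hr1 (by omega)
        · exact ⟨_, rfl⟩
      simp only [sheight] at hr1
      show GML.sat G ((NFiter P (aP P X (.var Y) h)).subst ((NFP P).iterFormula r)) v ↔ _
      simp only [NFiter, aP, aIter, Schema.subst]
      exact hH Y r v (by omega) (by omega)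
  | neg ψ ih =>
      intro h r hr1 hr2 v
      obtain ⟨r, rfl⟩ : ∃ r', r = r' + 1 := by
        cases r
        · exact absurd hr1 (by omega)
        · exact ⟨_, rfl⟩
      simp only [sheight] at hr1
      show GML.sat G ((NFiter P (aP P X (.neg ψ) h)).subst ((NFP P).iterFormula r)) v ↔ _
      simp only [NFiter, aP, aIter, Schema.subst, GML.sat]
      exact not_congr (ih _ r (by omega) (by omega) v)
  | and ψ χ ih1 ih2 =>
      intro h r hr1 hr2 v
      obtain ⟨r, rfl⟩ : ∃ r', r = r' + 1 := by
        cases r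
        · exact absurd hr1 (by omega)
        · exact ⟨_, rfl⟩
      simp only [sheight] at hr1
      show GML.sat G ((NFiter P (aP P X (.and ψ χ) h)).subst ((NFP P).iterFormula r)) v ↔ _
      simp only [NFiter, aP, aIter, Schema.subst, GML.sat]
      exact and_congr (ih1 _ r (by omega) (by omega) v) (ih2 _ r (by omega) (by omega) v)
  | dia k ψ ih =>
      intro h r hr1 hr2 v
      obtain ⟨r, rfl⟩ : ∃ r', r = r' + 1 := by
        cases r
        · exact absurd hr1 (by omega)
        · exact ⟨_, rfl⟩
      simp only [sheight] at hr1
      show GML.sat G ((NFiter P (aP P X (.dia k ψ) h)).subst ((NFP P).iterFormula r)) v ↔ _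
      simp only [NFiter, aP, aIter, Schema.subst, GML.sat]
      constructor
      · rintro ⟨s, hs, hc, hall⟩
        exact ⟨s, hs, hc, fun u hu => (ih _ r (by omega) (by omega) u).1 (hall u hu)⟩
      · rintro ⟨s, hs, hc, hall⟩
        exact ⟨s, hs, hc, fun u hu => (ih _ r (by omega) (by omega) u).2 (hall u hu)⟩

end GMSCNF

namespace GMSCNF

variable {α ν : Type} [Fintype ν] (P : Program α ν) (G : LGraph α)

lemma hd_zero' (r : ℕ) (X : ν) (v : G.V) (hr : r < mm P) :
    ¬ GML.sat G ((NFP P).iterFormula r (hd P X)) v := by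
  induction r with
  | zero => exact hd_zero P G X v
  | succ r ih =>
      rw [hd_succ]
      have h1 : r % mm P = r := Nat.mod_eq_of_lt (by omega)
      rintro (⟨h, _⟩ | ⟨h, _, _⟩ | ⟨_, h⟩)
      · omega
      · rw [h1] at h; omega
      · exact ih (by omega) h

lemma h_base (X : ν) (v : G.V) :
    GML.sat G ((NFP P).iterFormula (mm P) (hd P X)) v ↔ GML.sat G (P.term X) v := by
  have hm := two_le_mm P
  obtain ⟨r, hr⟩ : ∃ r, mm P = r + 1 := ⟨mm P - 1, by omega⟩
  rw [hr, hd_succ]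
  have hmm : mm P = DD P + 2 := rfl
  have hD := gheight_term_le P X
  have ht := t_sat P G X (P.term X) (self_mem_gsubs _) r (by omega) v
  rw [ht]
  have h1 : r = mm P - 1 := by omega
  have h2 : r % mm P = mm P - 1 := by rw [Nat.mod_eq_of_lt (by omega)]; omega
  simp [h2, h1]

lemma h_step (n : ℕ) (hn : 1 ≤ n)
    (hH : ∀ (Y : ν) (r' : ℕ) (v : G.V), mm P * n ≤ r' → r' < mm P * n + mm P →
      (GML.sat G ((NFP P).iterFormula r' (hd P Y)) v ↔
        GML.sat G (P.iterFormula (n-1) Y) v))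
    (X : ν) (v : G.V) :
    GML.sat G ((NFP P).iterFormula (mm P * (n+1)) (hd P X)) v ↔
      GML.sat G (P.iterFormula n X) v := by
  have hm := two_le_mm P
  have hmn : mm P ≤ mm P * n := Nat.le_mul_of_pos_right _ hn
  have hsplit : mm P * (n+1) = mm P * n + mm P := by ring
  obtain ⟨r, hr⟩ : ∃ r, mm P * (n+1) = r + 1 := ⟨mm P * (n+1) - 1, by omega⟩
  have hr2 : r = mm P * n + (mm P - 1) := by omega
  rw [hr, hd_succ]
  have h1 : ¬ (r = mm P - 1) := by omega
  have h2 : r % mm P = mm P - 1 := by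
    rw [hr2, Nat.mul_add_mod]; exact Nat.mod_eq_of_lt (by omega)
  have hmm : mm P = DD P + 2 := rfl
  have hs := sheight_iter_le P X
  have ha := a_sat P G X n hH (P.iter X) (self_mem_ssubs _) r (by omega) (by omega) v
  rw [ha]
  have hform : P.iterFormula n X = (P.iter X).subst (P.iterFormula (n-1)) := by
    obtain ⟨k, rfl⟩ : ∃ k, n = k + 1 := ⟨n - 1, by omega⟩
    simp [Program.iterFormula]
  rw [hform]
  simp [h1, h2]

lemma h_window (X : ν) (n : ℕ) (hn : 1 ≤ n) (Q : G.V → Prop)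
    (base : ∀ v, GML.sat G ((NFP P).iterFormula (mm P * n) (hd P X)) v ↔ Q v) :
    ∀ r, mm P * n ≤ r → r < mm P * n + mm P → ∀ v,
      (GML.sat G ((NFP P).iterFormula r (hd P X)) v ↔ Q v) := by
  have hm := two_le_mm P
  have hmn : mm P ≤ mm P * n := Nat.le_mul_of_pos_right _ hn
  intro r
  induction r with
  | zero => intro h1 _ v; exact absurd h1 (by omega)
  | succ r ih =>
      intro h1 h2 v
      by_cases hb : mm P * n = r + 1
      · rw [← hb]; exact base v
      · have h1' : mm P * n ≤ r := by omega
        obtain ⟨j, hj⟩ : ∃ j, r = mm P * n + j := ⟨r - mm P * n, by omega⟩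
        have hjlt : j < mm P - 1 := by omega
        have hmod : r % mm P = j := by
          rw [hj, Nat.mul_add_mod]; exact Nat.mod_eq_of_lt (by omega)
        have hk : ¬ (r % mm P = mm P - 1) := by omega
        have hf : ¬ (r = mm P - 1) := by omega
        rw [hd_succ]
        have := ih h1' (by omega) v
        simp [hk, hf, this]

lemma h_inv : ∀ n, 1 ≤ n → ∀ r, mm P * n ≤ r → r < mm P * n + mm P →
    ∀ (X : ν) (v : G.V),
    (GML.sat G ((NFP P).iterFormula r (hd P X)) v ↔
      GML.sat G (P.iterFormula (n-1) X) v) := by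
  intro n
  induction n with
  | zero => intro h; exact absurd h (by omega)
  | succ n ih =>
      intro _ r h1 h2 X v
      rcases Nat.eq_zero_or_pos n with hn | hn
      · subst hn
        refine h_window P G X 1 le_rfl (fun v => GML.sat G (P.iterFormula 0 X) v)
            (fun v => ?_) r h1 h2 v
        rw [Nat.mul_one]
        exact h_base P G X v
      · exact h_window P G X (n+1) (by omega) (fun v => GML.sat G (P.iterFormula n X) v)
          (fun v => h_step P G n hn (fun Y r' v h1 h2 => ih hn r' h1 h2 Y v) X v) r h1 h2 v

end GMSCNF

/-- Every GMSC program can be transformed into an equivalent normal-form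
GMSC program (over a possibly different finite set of head predicates) in which every
terminal clause has modal depth 0 and every iteration clause has modal depth at most 1;
the two programs accept exactly the same finite pointed labeled graphs. -/
theorem gmsc_normal_form {α ν : Type} [Fintype ν] (P : Program α ν) :
    ∃ (ν' : Type) (_ : Fintype ν') (P' : Program α ν'),
      (∀ X : ν', (P'.term X).mdepth = 0) ∧
      (∀ X : ν', (P'.iter X).mdepth ≤ 1) ∧
      (∀ (G : LGraph α) (w : G.V), P.accepts G w ↔ P'.accepts G w) := by
  classical
  refine ⟨GMSCNF.Idx P, inferInstance, GMSCNF.NFP P, GMSCNF.term_mdepth P,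
    GMSCNF.iter_mdepth P, ?_⟩
  intro G w
  have hm := GMSCNF.two_le_mm P
  constructor
  · rintro ⟨X, hX, n, hsat⟩
    refine ⟨GMSCNF.hd P X, ⟨X, hX, rfl⟩, GMSCNF.mm P * (n+1), ?_⟩
    rw [GMSCNF.h_inv P G (n+1) (by omega) (GMSCNF.mm P * (n+1)) le_rfl (by omega) X w]
    exact hsat
  · rintro ⟨i, ⟨X, hX, rfl⟩, r, hsat⟩
    by_cases hr : r < GMSCNF.mm P
    · exact absurd hsat (GMSCNF.hd_zero' P G r X w hr)
    · have h1 : r % GMSCNF.mm P + GMSCNF.mm P * (r / GMSCNF.mm P) = r := Nat.mod_add_div r _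
      have h2 : r % GMSCNF.mm P < GMSCNF.mm P := Nat.mod_lt _ (by omega)
      obtain ⟨t, ht⟩ : ∃ t, GMSCNF.mm P * (r / GMSCNF.mm P) = t := ⟨_, rfl⟩
      rw [ht] at h1
      have hq1 : 1 ≤ r / GMSCNF.mm P := (Nat.one_le_div_iff (by omega)).2 (by omega)
      have hw1 : GMSCNF.mm P * (r / GMSCNF.mm P) ≤ r := by rw [ht]; omega
      have hw2 : r < GMSCNF.mm P * (r / GMSCNF.mm P) + GMSCNF.mm P := by rw [ht]; omega
      exact ⟨X, hX, r / GMSCNF.mm P - 1,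
        (GMSCNF.h_inv P G (r / GMSCNF.mm P) hq1 r hw1 hw2 X w).1 hsat⟩
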